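/- arXiv:1306.4688 — 5 statements merged into one kernel-verified Lean document; each statement's English description precedes it below -/
import Mathlib

section
/- Let h : [a,b] → ℝ be concave and continuous, and suppose h is affine (linear) on a subinterval [x,y] ⊆ [a,b]. Define ĥ(t) as the measure of the set {s ∈ [a,b] : h(s) ≥ h(t)}. Then ĥ is concave on [x,y], i.e., for all x', y' ∈ [x,y], ĥ((x'+y')/2) ≥ (ĥ(x') + ĥ(y'))/2. -/
open MeasureTheory Set

lemma vol_eq_sSup_sub_sInf (S : Set ℝ) (a b : ℝ) (hS : S ⊆ Icc a b)
    (hne : S.Nonempty) (hoc : S.OrdConnected) :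
    (volume S).toReal = sSup S - sInf S := by
  have hbdd : BddAbove S := ⟨b, fun z hz => (hS hz).2⟩
  have hbdb : BddBelow S := ⟨a, fun z hz => (hS hz).1⟩
  obtain ⟨z0, hz0⟩ := hne
  have hle : sInf S ≤ sSup S := le_trans (csInf_le hbdb hz0) (le_csSup hbdd hz0)
  have h1 : S ⊆ Icc (sInf S) (sSup S) := fun z hz => ⟨csInf_le hbdb hz, le_csSup hbdd hz⟩
  have h2 : Ioo (sInf S) (sSup S) ⊆ S := by
    intro z hz
    obtain ⟨p, hp, hpz⟩ := exists_lt_of_csInf_lt ⟨z0, hz0⟩ hz.1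
    obtain ⟨q, hq, hzq⟩ := exists_lt_of_lt_csSup ⟨z0, hz0⟩ hz.2
    exact hoc.out hp hq ⟨hpz.le, hzq.le⟩
  have hA := measure_mono (μ := volume) h1
  have hB := measure_mono (μ := volume) h2
  rw [Real.volume_Icc] at hA
  rw [Real.volume_Ioo] at hB
  have : volume S = ENNReal.ofReal (sSup S - sInf S) := le_antisymm hA hB
  rw [this, ENNReal.toReal_ofReal (by linarith)]

theorem superlevel_length_concave_on_affine_piece (a b x y : ℝ) (hab : a ≤ b)
    (hx : x ∈ Icc a b) (hy : y ∈ Icc a b) (hxy : x ≤ y) (h : ℝ → ℝ)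
    (hconc : ConcaveOn ℝ (Icc a b) h) (hcont : ContinuousOn h (Icc a b))
    (c d : ℝ) (haff : ∀ t ∈ Icc x y, h t = c * t + d) :
    ∀ x' ∈ Icc x y, ∀ y' ∈ Icc x y,
      ((volume {s ∈ Icc a b | h x' ≤ h s}).toReal
        + (volume {s ∈ Icc a b | h y' ≤ h s}).toReal) / 2
      ≤ (volume {s ∈ Icc a b | h ((x' + y') / 2) ≤ h s}).toReal := by
  intro x' hx' y' hy'
  have hsub : Icc x y ⊆ Icc a b := Icc_subset_Icc hx.1 hy.2
  set m := (x' + y') / 2 with hmdef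
  have hmxy : m ∈ Icc x y := ⟨by rw [hmdef]; linarith [hx'.1, hy'.1],
    by rw [hmdef]; linarith [hx'.2, hy'.2]⟩
  have hval : h m = (h x' + h y') / 2 := by
    rw [haff _ hmxy, haff _ hx', haff _ hy', hmdef]; ring
  set S1 := {s ∈ Icc a b | h x' ≤ h s} with hS1
  set S2 := {s ∈ Icc a b | h y' ≤ h s} with hS2
  set Sm := {s ∈ Icc a b | h m ≤ h s} with hSm
  have hconv : ∀ t : ℝ, Convex ℝ {s ∈ Icc a b | h t ≤ h s} := fun t =>
    hconc.convex_ge (h t)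
  have hsub1 : S1 ⊆ Icc a b := fun z hz => hz.1
  have hsub2 : S2 ⊆ Icc a b := fun z hz => hz.1
  have hsubm : Sm ⊆ Icc a b := fun z hz => hz.1
  have hne1 : S1.Nonempty := ⟨x', hsub hx', le_refl _⟩
  have hne2 : S2.Nonempty := ⟨y', hsub hy', le_refl _⟩
  have hnem : Sm.Nonempty := ⟨m, hsub hmxy, le_refl _⟩
  have hv1 := vol_eq_sSup_sub_sInf S1 a b hsub1 hne1 (hconv x').ordConnected
  have hv2 := vol_eq_sSup_sub_sInf S2 a b hsub2 hne2 (hconv y').ordConnected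
  have hvm := vol_eq_sSup_sub_sInf Sm a b hsubm hnem (hconv m).ordConnected
  have hbdd1 : BddAbove S1 := ⟨b, fun z hz => (hsub1 hz).2⟩
  have hbdb1 : BddBelow S1 := ⟨a, fun z hz => (hsub1 hz).1⟩
  have hbdd2 : BddAbove S2 := ⟨b, fun z hz => (hsub2 hz).2⟩
  have hbdb2 : BddBelow S2 := ⟨a, fun z hz => (hsub2 hz).1⟩
  have hbddm : BddAbove Sm := ⟨b, fun z hz => (hsubm hz).2⟩
  have hbdbm : BddBelow Sm := ⟨a, fun z hz => (hsubm hz).1⟩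
  -- key: midpoints of S1 and S2 lie in Sm
  have key : ∀ p ∈ S1, ∀ q ∈ S2, (p + q) / 2 ∈ Sm := by
    intro p hp q hq
    have hmem : (p + q) / 2 ∈ Icc a b := by
      constructor
      · have := hp.1.1; have := hq.1.1; linarith
      · have := hp.1.2; have := hq.1.2; linarith
    refine ⟨hmem, ?_⟩
    have hc := hconc.2 hp.1 hq.1 (by norm_num : (0:ℝ) ≤ 1/2)
      (by norm_num : (0:ℝ) ≤ 1/2) (by norm_num)
    have h1 : h x' ≤ h p := hp.2
    have h2 : h y' ≤ h q := hq.2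
    have : (1/2 : ℝ) • p + (1/2 : ℝ) • q = (p + q) / 2 := by
      simp [smul_eq_mul]; ring
    rw [this] at hc
    rw [hval]
    have : (h x' + h y') / 2 ≤ (1/2 : ℝ) • h p + (1/2 : ℝ) • h q := by
      simp [smul_eq_mul]; linarith
    linarith
  -- sSup inequality
  have hsup : (sSup S1 + sSup S2) / 2 ≤ sSup Sm := by
    have h1 : sSup S1 ≤ 2 * sSup Sm - sSup S2 := by
      apply csSup_le hne1
      intro p hp
      have h2 : sSup S2 ≤ 2 * sSup Sm - p := by
        apply csSup_le hne2
        intro q hq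
        have := le_csSup hbddm (key p hp q hq)
        linarith
      linarith
    linarith
  -- sInf inequality
  have hinf : sInf Sm ≤ (sInf S1 + sInf S2) / 2 := by
    have h1 : 2 * sInf Sm - sInf S2 ≤ sInf S1 := by
      apply le_csInf hne1
      intro p hp
      have h2 : 2 * sInf Sm - p ≤ sInf S2 := by
        apply le_csInf hne2
        intro q hq
        have := csInf_le hbdbm (key p hp q hq)
        linarith
      linarith
    linarith
  rw [hv1, hv2, hvm]
  linarith
end

section
/- Let K be a field, F ∈ K[x^{±1}, y^{±1}] a Laurent polynomial with support A ⊆ ℤ², and suppose F ∈ ⟨x-1, y-1⟩^m in the local ring at (1,1). If the lattice width of A in the direction u = (1,0) satisfies ω_{(1,0)}(A) = m - a for some a > 0, then (y-1)^a divides F. -/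
noncomputable section

abbrev Laurent2 (K : Type*) [Field K] := AddMonoidAlgebra K (ℤ × ℤ)

variable {K : Type*} [Field K]

noncomputable def Lx (K : Type*) [Field K] : Laurent2 K := AddMonoidAlgebra.single (1, 0) 1
noncomputable def Ly (K : Type*) [Field K] : Laurent2 K := AddMonoidAlgebra.single (0, 1) 1

noncomputable def idealPt (K : Type*) [Field K] : Ideal (Laurent2 K) :=
  Ideal.span {Lx K - 1, Ly K - 1}

/-!
Expand `F` in powers of `y - 1` with coefficients in `K[x^{±1}]`: `F = ∑ₖ Dₖ F · (y - 1)^k`.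
Since `Dₖ` commutes with multiplication by `x - 1` and shifts `k` down by one under
multiplication by `y - 1`, membership of `F` in `⟨x - 1, y - 1⟩^m` forces
`(x - 1)^(m - k) ∣ Dₖ F`.
Multiplying by `x - 1` widens the support of a nonzero Laurent polynomial by one, while the
support of `Dₖ F` lies in the projection of `A` to the first coordinate, of width `m - a`.
Hence `Dₖ F = 0` for `k < a`, which is exactly divisibility of `F` by `(y - 1)^a`.
-/

open LaurentPolynomial

namespace LaurentPolynomial

variable {R : Type*} [Ring R]

lemma coeff_T_one_sub_one_mul (g : R[T;T⁻¹]) (n : ℤ) :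
    ((T 1 - 1) * g).coeff n = g.coeff (n - 1) - g.coeff n := by
  rw [sub_mul, one_mul, AddMonoidAlgebra.coeff_sub, Finsupp.sub_apply, T,
    AddMonoidAlgebra.coeff_single_mul_apply, one_mul, ← sub_eq_neg_add]

lemma exists_support_gap_T_one_sub_one_mul {g : R[T;T⁻¹]} {w : ℤ} {s t : ℤ}
    (hs : s ∈ g.coeff.support) (ht : t ∈ g.coeff.support) (hst : t + w ≤ s) :
    ∃ s' ∈ ((T 1 - 1) * g).coeff.support, ∃ t' ∈ ((T 1 - 1) * g).coeff.support,
      t' + (w + 1) ≤ s' := by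
  have hne : g.coeff.support.Nonempty := ⟨s, hs⟩
  set top := g.coeff.support.max' hne
  set bot := g.coeff.support.min' hne
  have h_above : g.coeff (top + 1) = 0 :=
    Finsupp.notMem_support_iff.mp fun h => by linarith [g.coeff.support.le_max' _ h]
  have h_below : g.coeff (bot - 1) = 0 :=
    Finsupp.notMem_support_iff.mp fun h => by linarith [g.coeff.support.min'_le _ h]
  refine ⟨top + 1, ?_, bot, ?_, ?_⟩
  · rw [Finsupp.mem_support_iff, coeff_T_one_sub_one_mul, add_sub_cancel_right, h_above,
      sub_zero]
    exact Finsupp.mem_support_iff.mp (g.coeff.support.max'_mem hne)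
  · rw [Finsupp.mem_support_iff, coeff_T_one_sub_one_mul, h_below, zero_sub, neg_ne_zero]
    exact Finsupp.mem_support_iff.mp (g.coeff.support.min'_mem hne)
  · linarith [g.coeff.support.le_max' _ hs, g.coeff.support.min'_le _ ht]

lemma exists_support_gap_T_one_sub_one_pow_mul {g : R[T;T⁻¹]} (hg : g ≠ 0) (w : ℕ) :
    ∃ s ∈ ((T 1 - 1) ^ w * g).coeff.support, ∃ t ∈ ((T 1 - 1) ^ w * g).coeff.support,
      t + (w : ℤ) ≤ s := by
  induction w with
  | zero =>
    obtain ⟨s, hs⟩ := Finsupp.support_nonempty_iff.mpr (mt AddMonoidAlgebra.coeff_eq_zero.mp hg)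
    exact ⟨s, by simpa using hs, s, by simpa using hs, by simp⟩
  | succ w ih =>
    obtain ⟨s, hs, t, ht, hst⟩ := ih
    rw [pow_succ', mul_assoc, Nat.cast_succ]
    exact exists_support_gap_T_one_sub_one_mul hs ht hst

theorem eq_zero_of_T_one_sub_one_pow_dvd {h : R[T;T⁻¹]} {w : ℕ} (hdvd : (T 1 - 1) ^ w ∣ h)
    (hwidth : ∀ s ∈ h.coeff.support, ∀ t ∈ h.coeff.support, s - t < w) : h = 0 := by
  obtain ⟨g, rfl⟩ := hdvd
  by_contra hne
  obtain ⟨s, hs, t, ht, hst⟩ :=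
    exists_support_gap_T_one_sub_one_pow_mul (right_ne_zero_of_mul hne) w
  linarith [hwidth s hs t ht]

end LaurentPolynomial

namespace Laurent2

/-- The coefficient `Dₖ F` of `(y - 1)^k`: the monomial `x^i y^j` contributes
`(j choose k) x^i`. -/
def hasseY (k : ℕ) : Laurent2 K →+ K[T;T⁻¹] :=
  AddMonoidAlgebra.liftNC (C : K →+* K[T;T⁻¹]).toAddMonoidHom
    fun p => C ((Ring.choose p.toAdd.2 k : ℤ) : K) * T p.toAdd.1

lemma hasseY_single (k : ℕ) (i j : ℤ) (c : K) :
    hasseY k (.single (i, j) c) = C c * (C ((Ring.choose j k : ℤ) : K) * T i) :=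
  AddMonoidAlgebra.liftNC_single _ _ _ _

lemma Lx_mul_single (i j : ℤ) (c : K) :
    Lx K * .single (i, j) c = .single (1 + i, j) c := by
  simp [Lx, AddMonoidAlgebra.single_mul_single]

lemma Ly_mul_single (i j : ℤ) (c : K) :
    Ly K * .single (i, j) c = .single (i, 1 + j) c := by
  simp [Ly, AddMonoidAlgebra.single_mul_single]

lemma hasseY_Lx_mul (k : ℕ) (u : Laurent2 K) : hasseY k (Lx K * u) = T 1 * hasseY k u := by
  induction u using AddMonoidAlgebra.induction_linear with
  | zero => simp
  | add f g hf hg => rw [mul_add, map_add, hf, hg, map_add, mul_add]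
  | single p c =>
    rw [Lx_mul_single, hasseY_single, hasseY_single, T_add]
    ring

lemma hasseY_zero_Ly_mul (v : Laurent2 K) : hasseY 0 (Ly K * v) = hasseY 0 v := by
  induction v using AddMonoidAlgebra.induction_linear with
  | zero => simp
  | add f g hf hg => rw [mul_add, map_add, hf, hg, map_add]
  | single p c =>
    rw [Ly_mul_single, hasseY_single, hasseY_single, Ring.choose_zero_right,
      Ring.choose_zero_right]

lemma hasseY_succ_Ly_mul (k : ℕ) (v : Laurent2 K) :
    hasseY (k + 1) (Ly K * v) = hasseY (k + 1) v + hasseY k v := by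
  induction v using AddMonoidAlgebra.induction_linear with
  | zero => simp
  | add f g hf hg =>
    rw [mul_add, map_add, hf, hg, map_add, map_add]
    abel
  | single p c =>
    rw [Ly_mul_single, hasseY_single, hasseY_single, hasseY_single, add_comm 1,
      Ring.choose_succ_succ, Int.cast_add, map_add]
    ring

lemma hasseY_Lx_sub_one_mul (k : ℕ) (u : Laurent2 K) :
    hasseY k ((Lx K - 1) * u) = (T 1 - 1) * hasseY k u := by
  rw [sub_mul, one_mul, map_sub, hasseY_Lx_mul, sub_mul, one_mul]

lemma hasseY_zero_Ly_sub_one_mul (v : Laurent2 K) : hasseY 0 ((Ly K - 1) * v) = 0 := by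
  rw [sub_mul, one_mul, map_sub, hasseY_zero_Ly_mul, sub_self]

lemma hasseY_succ_Ly_sub_one_mul (k : ℕ) (v : Laurent2 K) :
    hasseY (k + 1) ((Ly K - 1) * v) = hasseY k v := by
  rw [sub_mul, one_mul, map_sub, hasseY_succ_Ly_mul, add_sub_cancel_left]

def embedX : K[T;T⁻¹] →+* Laurent2 K :=
  AddMonoidAlgebra.mapDomainRingHom K (AddMonoidHom.inl ℤ ℤ)

lemma Ly_sub_one_dvd_single_sub_one (j : ℤ) :
    Ly K - 1 ∣ (.single (0, j) 1 : Laurent2 K) - 1 := by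
  have single_natCast (n : ℕ) : (.single (0, (n : ℤ)) 1 : Laurent2 K) = Ly K ^ n := by
    simp [Ly, AddMonoidAlgebra.single_pow]
  obtain ⟨n, rfl | rfl⟩ := Int.eq_nat_or_neg j
  · rw [single_natCast]
    exact sub_one_dvd_pow_sub_one _ n
  · have hinv : (.single (0, -(n : ℤ)) 1 : Laurent2 K) * Ly K ^ n = 1 := by
      rw [← single_natCast, AddMonoidAlgebra.single_mul_single]
      simp [AddMonoidAlgebra.one_def, Prod.mk_zero_zero]
    have h := (sub_one_dvd_pow_sub_one (Ly K) n).mul_left (-.single (0, -(n : ℤ)) 1)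
    rwa [show -(.single (0, -(n : ℤ)) 1 : Laurent2 K) * (Ly K ^ n - 1)
      = .single (0, -(n : ℤ)) 1 - 1 by linear_combination -hinv] at h

lemma Ly_sub_one_dvd_sub_embedX_hasseY_zero (F : Laurent2 K) :
    Ly K - 1 ∣ F - embedX (hasseY 0 F) := by
  induction F using AddMonoidAlgebra.induction_linear with
  | zero => simp
  | add f g hf hg =>
    rw [map_add, map_add, add_sub_add_comm]
    exact dvd_add hf hg
  | single p c =>
    obtain ⟨i, j⟩ := p
    have hsplit : (.single (i, j) c : Laurent2 K) - .single (i, 0) c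
        = .single (i, 0) c * (.single (0, j) 1 - 1) := by
      rw [mul_sub, AddMonoidAlgebra.single_mul_single]
      simp
    rw [hasseY_single, Ring.choose_zero_right, Int.cast_one, map_one, one_mul,
      ← single_eq_C_mul_T, embedX, AddMonoidAlgebra.mapDomainRingHom_apply,
      AddMonoidAlgebra.mapDomain_single, AddMonoidHom.inl_apply, hsplit]
    exact (Ly_sub_one_dvd_single_sub_one j).mul_left _

theorem Ly_sub_one_pow_dvd_of_hasseY_eq_zero {a : ℕ} {F : Laurent2 K}
    (h : ∀ k < a, hasseY k F = 0) : (Ly K - 1) ^ a ∣ F := by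
  induction a generalizing F with
  | zero => exact pow_zero (Ly K - 1) ▸ one_dvd F
  | succ a ih =>
    obtain ⟨G, rfl⟩ : Ly K - 1 ∣ F := by
      simpa [h 0 a.succ_pos] using Ly_sub_one_dvd_sub_embedX_hasseY_zero F
    rw [pow_succ']
    refine mul_dvd_mul_left _ (ih fun k hk => ?_)
    rw [← hasseY_succ_Ly_sub_one_mul]
    exact h (k + 1) (by omega)

theorem T_one_sub_one_pow_dvd_hasseY {m : ℕ} {F : Laurent2 K} (hF : F ∈ idealPt K ^ m)
    (k : ℕ) : (T 1 - 1) ^ (m - k) ∣ hasseY k F := by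
  induction m generalizing F k with
  | zero => simp
  | succ m ih =>
    rw [pow_succ'] at hF
    nth_rw 1 [idealPt] at hF
    rw [Ideal.span_insert, Ideal.sup_mul] at hF
    obtain ⟨_, hxu, _, hyv, rfl⟩ := Submodule.mem_sup.mp hF
    obtain ⟨u, hu, rfl⟩ := Ideal.mem_span_singleton_mul.mp hxu
    obtain ⟨v, hv, rfl⟩ := Ideal.mem_span_singleton_mul.mp hyv
    rw [map_add, hasseY_Lx_sub_one_mul]
    refine dvd_add ((pow_dvd_pow _ (by omega : m + 1 - k ≤ m - k + 1)).trans ?_) ?_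
    · rw [pow_succ']
      exact mul_dvd_mul_left _ (ih hu k)
    · cases k with
      | zero => rw [hasseY_zero_Ly_sub_one_mul]; exact dvd_zero _
      | succ k => rw [hasseY_succ_Ly_sub_one_mul, Nat.add_sub_add_right]; exact ih hv k

lemma support_hasseY_subset (k : ℕ) (F : Laurent2 K) :
    (hasseY k F).coeff.support ⊆ F.coeff.support.image Prod.fst := by
  classical
  intro n hn
  rw [← AddMonoidAlgebra.sum_coeff_single F, Finsupp.sum, map_sum,
    AddMonoidAlgebra.coeff_sum] at hn
  obtain ⟨p, hp, hn⟩ := Finset.mem_biUnion.mp (Finsupp.support_finsetSum hn)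
  rw [hasseY_single, ← mul_assoc, ← map_mul] at hn
  rw [Finset.mem_singleton.mp (support_C_mul_T _ _ hn)]
  exact Finset.mem_image_of_mem _ hp

end Laurent2

open Laurent2

theorem vertical_divisibility_of_small_width_general (F : Laurent2 K)
    (hne : F.coeff.support.Nonempty) (m a : ℕ)
    (hmem : F ∈ idealPt K ^ m)
    (hwidth : F.coeff.support.sup' hne (fun p => p.1) - F.coeff.support.inf' hne (fun p => p.1)
      = (m : ℤ) - (a : ℤ)) :
    (Ly K - 1) ^ a ∣ F := by
  refine Ly_sub_one_pow_dvd_of_hasseY_eq_zero fun k hk => ?_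
  refine eq_zero_of_T_one_sub_one_pow_dvd (T_one_sub_one_pow_dvd_hasseY hmem k)
    fun s hs t ht => ?_
  obtain ⟨p, hp, rfl⟩ := Finset.mem_image.mp (support_hasseY_subset k F hs)
  obtain ⟨q, hq, rfl⟩ := Finset.mem_image.mp (support_hasseY_subset k F ht)
  have hp_le_sup : p.1 ≤ F.coeff.support.sup' hne (fun p => p.1) := Finset.le_sup' _ hp
  have hinf_le_p : F.coeff.support.inf' hne (fun p => p.1) ≤ p.1 := Finset.inf'_le _ hp
  have hinf_le_q : F.coeff.support.inf' hne (fun p => p.1) ≤ q.1 := Finset.inf'_le _ hq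
  omega

theorem vertical_divisibility_of_small_width (F : Laurent2 K) (hF : F ≠ 0)
    (hne : F.coeff.support.Nonempty) (m a : ℕ) (ha : 0 < a)
    (hmem : F ∈ idealPt K ^ m)
    (hwidth : F.coeff.support.sup' hne (fun p => p.1) - F.coeff.support.inf' hne (fun p => p.1)
      = (m : ℤ) - (a : ℤ)) :
    (Ly K - 1) ^ a ∣ F :=
  vertical_divisibility_of_small_width_general F hne m a hmem hwidth

end
end

section
/- Let B ⊂ ℝ² be a convex lattice polygon with minimal lattice width ω(B) = 2k for a nonnegative integer k. Then area(B) ≥ (3/2) k². -/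
/-
Let `u` realise the lattice width `2k`. Minimality makes `u` primitive, so it extends to a
unimodular basis `(v, u)`; shearing `v` along `u`, the chord `ab` realising the width in direction
`u` has coordinates `A = (t, 2k)` with `0 ≤ t < 2k`. Chords `D` and `G` realising the widths in
directions `v` and `v - u` have `D.1 ≥ 2k` and `G.1 - G.2 ≥ 2k`, while `|D.2|, |G.2| ≤ 2k`; an
elementary inequality then forces one of the three determinants of `A, D, G` to be at least `3k²`
in absolute value. Finally, the convex hull of four points `p, q, r, s` has area at least
`|det(q - p, s - r)| / 2`.
-/

open Finset Set MeasureTheory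

/-- Embedding of lattice points into the real plane. -/
def toR (p : ℤ × ℤ) : ℝ × ℝ := ((p.1 : ℝ), (p.2 : ℝ))

/-- Integer pairing `u ⋅ p`. -/
def zdot (u p : ℤ × ℤ) : ℤ := u.1 * p.1 + u.2 * p.2

/-- The lattice width of the lattice polygon with vertex set `S` in the direction `u`. -/
def widthZ (u : ℤ × ℤ) (S : Finset (ℤ × ℤ)) (h : S.Nonempty) : ℤ :=
  S.sup' h (zdot u) - S.inf' h (zdot u)

/-- The Euclidean area of the convex hull of the lattice points `S`. -/
noncomputable def areaOf (S : Finset (ℤ × ℤ)) : ℝ :=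
  (volume (convexHull ℝ (toR '' (S : Set (ℤ × ℤ))))).toReal

open Pointwise

def wedge {R : Type*} [CommRing R] (a b : R × R) : R := a.1 * b.2 - a.2 * b.1

@[simp]
theorem wedge_self {R : Type*} [CommRing R] (a : R × R) : wedge a a = 0 := by
  simp only [wedge]; ring

theorem isLinearMap_wedge {R : Type*} [CommRing R] (a : R × R) : IsLinearMap R (wedge a) :=
  ⟨fun x y => by simp only [wedge, Prod.fst_add, Prod.snd_add]; ring,
    fun c x => by simp only [wedge, Prod.smul_fst, Prod.smul_snd, smul_eq_mul]; ring⟩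

theorem abs_sub_le_max_abs_of_mul_nonneg {α : Type*} [CommRing α] [LinearOrder α]
    [IsStrictOrderedRing α] {a b : α} (h : 0 ≤ a * b) : |a - b| ≤ max |a| |b| := by
  wlog hab : |a| ≤ |b| generalizing a b
  · rw [abs_sub_comm, max_comm]
    exact this (by rwa [mul_comm]) (le_of_not_ge hab)
  have haa : a * a ≤ a * b := by
    simpa only [abs_mul_abs_self, ← abs_mul, abs_of_nonneg h] using
      mul_le_mul_of_nonneg_left hab (abs_nonneg a)
  rw [max_eq_right hab, ← sq_le_sq]
  nlinarith

theorem add_smul_sub_add_smul_sub_mem_convexHull {E : Type*} [AddCommGroup E] [Module ℝ E]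
    {x y z : E} {s t : ℝ} (hs : 0 ≤ s) (ht : 0 ≤ t) (hst : s + t ≤ 1) :
    x + s • (y - x) + t • (z - x) ∈ convexHull ℝ {x, y, z} := by
  have hr : 0 ≤ 1 - s - t := by linarith
  have hmem := (convex_convexHull ℝ ({x, y, z} : Set E)).sum_mem (t := Finset.univ)
    (w := ![1 - s - t, s, t]) (z := ![x, y, z])
    (fun i _ => by fin_cases i <;> simp [hr, hs, ht])
    (by simp [Fin.sum_univ_three]; ring)
    (fun i _ => subset_convexHull ℝ _ (by fin_cases i <;> simp))
  convert hmem using 1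
  simp only [Fin.sum_univ_three, Fin.isValue, Matrix.cons_val_zero, Matrix.cons_val_one,
    Matrix.cons_val]
  module

theorem volume_parallelogram (x a b : ℝ × ℝ) :
    volume ((fun p : ℝ × ℝ => x + p.1 • a + p.2 • b) '' Icc (0 : ℝ) 1 ×ˢ Icc (0 : ℝ) 1) =
      ENNReal.ofReal |wedge a b| := by
  set L := Matrix.toLin (Module.Basis.finTwoProd ℝ) (Module.Basis.finTwoProd ℝ)
    !![a.1, b.1; a.2, b.2]
  have hL : (fun p : ℝ × ℝ => x + p.1 • a + p.2 • b) = (x +ᵥ ·) ∘ L := by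
    ext p <;> simp only [L, Function.comp_apply, vadd_eq_add, Matrix.toLin_finTwoProd_apply,
      Prod.fst_add, Prod.snd_add, Prod.smul_fst, Prod.smul_snd, smul_eq_mul] <;> ring
  rw [hL, Set.image_comp, Set.image_vadd, measure_vadd, Measure.addHaar_image_linearMap,
    LinearMap.det_toLin, Matrix.det_fin_two_of, Measure.volume_eq_prod, Measure.prod_prod]
  simp [wedge, mul_comm]

/-- The parallelogram spanned by a triangle is covered by the triangle and its point reflection. -/
theorem ofReal_abs_wedge_le_two_mul_volume_convexHull (x y z : ℝ × ℝ) :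
    ENNReal.ofReal |wedge (y - x) (z - x)| ≤ 2 * volume (convexHull ℝ {x, y, z}) := by
  set T := convexHull ℝ {x, y, z}
  set P := (fun p : ℝ × ℝ => x + p.1 • (y - x) + p.2 • (z - x)) '' Icc (0 : ℝ) 1 ×ˢ Icc (0 : ℝ) 1
  have hcover : P ⊆ T ∪ ((y + z) +ᵥ -T) := by
    rintro _ ⟨⟨s, t⟩, ⟨⟨hs₀, hs₁⟩, ⟨ht₀, ht₁⟩⟩, rfl⟩
    rcases le_total (s + t) 1 with hst | hst
    · exact Or.inl (add_smul_sub_add_smul_sub_mem_convexHull hs₀ ht₀ hst)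
    · refine Or.inr (Set.mem_vadd_set.2 ⟨_, Set.neg_mem_neg.2
        (add_smul_sub_add_smul_sub_mem_convexHull (x := x) (y := y) (z := z)
          (sub_nonneg.2 hs₁) (sub_nonneg.2 ht₁) (by linarith)), ?_⟩)
      simp only [vadd_eq_add]
      module
  calc ENNReal.ofReal |wedge (y - x) (z - x)| = volume P := (volume_parallelogram _ _ _).symm
    _ ≤ volume T + volume ((y + z) +ᵥ -T) := (measure_mono hcover).trans (measure_union_le _ _)
    _ = 2 * volume T := by rw [measure_vadd, Measure.measure_neg, two_mul]

theorem volume_setOf_wedge_eq {a : ℝ × ℝ} (ha : a ≠ 0) (c : ℝ) :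
    volume {z | wedge a z = c} = 0 := by
  rcases Set.eq_empty_or_nonempty {z | wedge a z = c} with he | ⟨z₀, hz₀ : wedge a z₀ = c⟩
  · rw [he, measure_empty]
  have hker : LinearMap.ker (isLinearMap_wedge a).mk' ≠ ⊤ := by
    intro htop
    have h : wedge a (-a.2, a.1) = 0 := LinearMap.mem_ker.1 (htop ▸ Submodule.mem_top)
    have h' : a.1 * a.1 + a.2 * a.2 = 0 := by simpa [wedge] using h
    obtain ⟨h₁, h₂⟩ := mul_self_add_mul_self_eq_zero.1 h'
    exact ha (Prod.ext h₁ h₂)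
  have hline : {z | wedge a z = c} = z₀ +ᵥ (LinearMap.ker (isLinearMap_wedge a).mk' : Set _) := by
    ext z
    rw [Set.mem_vadd_set_iff_neg_vadd_mem]
    simp only [Set.mem_ofPred_eq, SetLike.mem_coe, LinearMap.mem_ker, IsLinearMap.mk'_apply,
      vadd_eq_add, (isLinearMap_wedge a).map_add, (isLinearMap_wedge a).map_neg]
    constructor <;> intro h <;> linarith
  rw [hline, measure_vadd]
  exact Measure.addHaar_submodule _ _ hker

theorem volume_union_convexHull_eq_add {r s p q : ℝ × ℝ}
    (h : wedge (s - r) (p - r) * wedge (s - r) (q - r) < 0) :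
    volume (convexHull ℝ {r, s, p} ∪ convexHull ℝ {r, s, q}) =
      volume (convexHull ℝ {r, s, p}) + volume (convexHull ℝ {r, s, q}) := by
  -- a normal of the line `rs` pointing to the side of `p`
  set n := wedge (s - r) (p - r) • (s - r)
  have hn : n ≠ 0 := by
    refine smul_ne_zero (left_ne_zero_of_mul h.ne) fun hsr => ?_
    simp [hsr, wedge] at h
  have hside : ∀ z, wedge n z - wedge n r = wedge (s - r) (p - r) * wedge (s - r) (z - r) :=
    fun z => by
      simp only [n, wedge, Prod.fst_sub, Prod.snd_sub, Prod.smul_fst, Prod.smul_snd, smul_eq_mul]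
      ring
  have h₁ : convexHull ℝ {r, s, p} ⊆ {z | wedge n r ≤ wedge n z} := by
    refine convexHull_min ?_ (convex_halfSpace_ge (isLinearMap_wedge n) _)
    rintro z (rfl | rfl | rfl) <;> rw [Set.mem_ofPred_eq, ← sub_nonneg, hside]
    · simp [wedge]
    · simp
    · exact mul_self_nonneg _
  have h₂ : convexHull ℝ {r, s, q} ⊆ {z | wedge n z ≤ wedge n r} := by
    refine convexHull_min ?_ (convex_halfSpace_le (isLinearMap_wedge n) _)
    rintro z (rfl | rfl | rfl) <;> rw [Set.mem_ofPred_eq, ← sub_nonpos, hside]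
    · simp [wedge]
    · simp
    · exact h.le
  have hmeas : MeasurableSet (convexHull ℝ {r, s, q}) :=
    ((Set.toFinite _).isCompact_convexHull ℝ).isClosed.measurableSet
  refine measure_union₀ hmeas.nullMeasurableSet
    (measure_mono_null (fun z hz => ?_) (volume_setOf_wedge_eq hn (wedge n r)))
  exact le_antisymm (h₂ hz.2) (h₁ hz.1)

/-- The triangles on the base `rs` with apexes `p` and `q` suffice: one of them if `p` and `q` lie
on the same side of `rs`, both together otherwise. -/
theorem ofReal_abs_wedge_le_two_mul_volume_convexHull_of_mem {V : Set (ℝ × ℝ)}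
    {p q r s : ℝ × ℝ} (hp : p ∈ V) (hq : q ∈ V) (hr : r ∈ V) (hs : s ∈ V) :
    ENNReal.ofReal |wedge (q - p) (s - r)| ≤ 2 * volume (convexHull ℝ V) := by
  set c₁ := wedge (s - r) (p - r)
  set c₂ := wedge (s - r) (q - r)
  have hc : wedge (q - p) (s - r) = c₁ - c₂ := by
    simp only [c₁, c₂, wedge, Prod.fst_sub, Prod.snd_sub]; ring
  have hT₁ : convexHull ℝ {r, s, p} ⊆ convexHull ℝ V :=
    convexHull_mono (by simp [insert_subset_iff, hp, hr, hs])
  have hT₂ : convexHull ℝ {r, s, q} ⊆ convexHull ℝ V :=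
    convexHull_mono (by simp [insert_subset_iff, hq, hr, hs])
  have h₁ := ofReal_abs_wedge_le_two_mul_volume_convexHull r s p
  have h₂ := ofReal_abs_wedge_le_two_mul_volume_convexHull r s q
  rw [hc]
  rcases le_or_gt 0 (c₁ * c₂) with hsame | hopp
  · calc ENNReal.ofReal |c₁ - c₂| ≤ ENNReal.ofReal (max |c₁| |c₂|) :=
          ENNReal.ofReal_le_ofReal (abs_sub_le_max_abs_of_mul_nonneg hsame)
      _ ≤ 2 * volume (convexHull ℝ V) := by
          rw [ENNReal.ofReal_max]
          exact max_le (h₁.trans (by gcongr)) (h₂.trans (by gcongr))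
  · have habs : |c₁ - c₂| = |c₁| + |c₂| := by
      rcases lt_or_gt_of_ne (left_ne_zero_of_mul hopp.ne) with h | h
      · have h' : 0 < c₂ := pos_of_mul_neg_right hopp h.le
        rw [abs_of_neg h, abs_of_pos h', abs_of_neg (by linarith)]; ring
      · have h' : c₂ < 0 := neg_of_mul_neg_right hopp h.le
        rw [abs_of_pos h, abs_of_neg h', abs_of_pos (by linarith)]; ring
    calc ENNReal.ofReal |c₁ - c₂| = ENNReal.ofReal |c₁| + ENNReal.ofReal |c₂| := by
          rw [habs, ENNReal.ofReal_add (abs_nonneg _) (abs_nonneg _)]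
      _ ≤ 2 * volume (convexHull ℝ {r, s, p}) + 2 * volume (convexHull ℝ {r, s, q}) :=
          add_le_add h₁ h₂
      _ = 2 * volume (convexHull ℝ {r, s, p} ∪ convexHull ℝ {r, s, q}) := by
          rw [volume_union_convexHull_eq_add hopp, mul_add]
      _ ≤ 2 * volume (convexHull ℝ V) := by gcongr; exact union_subset hT₁ hT₂

theorem abs_wedge_le_two_mul_areaOf {S : Finset (ℤ × ℤ)} {P Q R T : ℤ × ℤ}
    (hP : P ∈ S) (hQ : Q ∈ S) (hR : R ∈ S) (hT : T ∈ S) :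
    |((wedge (Q - P) (T - R) : ℤ) : ℝ)| ≤ 2 * areaOf S := by
  have hV := ofReal_abs_wedge_le_two_mul_volume_convexHull_of_mem (Set.mem_image_of_mem toR hP)
    (Set.mem_image_of_mem toR hQ) (Set.mem_image_of_mem toR hR) (Set.mem_image_of_mem toR hT)
  have hcast : wedge (toR Q - toR P) (toR T - toR R) = ((wedge (Q - P) (T - R) : ℤ) : ℝ) := by
    simp only [wedge, toR, Prod.fst_sub, Prod.snd_sub]; push_cast; ring
  have hfin : volume (convexHull ℝ (toR '' (S : Set (ℤ × ℤ)))) ≠ ⊤ :=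
    ((S.finite_toSet.image _).isCompact_convexHull ℝ).measure_lt_top.ne
  rw [hcast, ENNReal.ofReal_le_iff_le_toReal (ENNReal.mul_ne_top (by simp) hfin),
    ENNReal.toReal_mul] at hV
  simpa [areaOf] using hV

theorem zdot_sub (u p q : ℤ × ℤ) : zdot u (p - q) = zdot u p - zdot u q := by
  simp only [zdot, Prod.fst_sub, Prod.snd_sub]; ring

theorem sub_zdot (v u p : ℤ × ℤ) : zdot (v - u) p = zdot v p - zdot u p := by
  simp only [zdot, Prod.fst_sub, Prod.snd_sub]; ring

theorem wedge_zdot_zdot (v u a b : ℤ × ℤ) :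
    wedge (zdot v a, zdot u a) (zdot v b, zdot u b) = wedge v u * wedge a b := by
  simp only [wedge, zdot]; ring

section Width

variable {S : Finset (ℤ × ℤ)} (h : S.Nonempty)

theorem zdot_sub_le_widthZ (u : ℤ × ℤ) {p q : ℤ × ℤ} (hp : p ∈ S) (hq : q ∈ S) :
    zdot u (p - q) ≤ widthZ u S h := by
  rw [zdot_sub, widthZ]
  exact sub_le_sub (le_sup' _ hp) (inf'_le _ hq)

theorem abs_zdot_sub_le_widthZ (u : ℤ × ℤ) {p q : ℤ × ℤ} (hp : p ∈ S) (hq : q ∈ S) :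
    |zdot u (p - q)| ≤ widthZ u S h := by
  refine abs_le.2 ⟨?_, zdot_sub_le_widthZ h u hp hq⟩
  have := zdot_sub_le_widthZ h u hq hp
  rw [zdot_sub] at this ⊢
  linarith

theorem exists_zdot_sub_eq_widthZ (u : ℤ × ℤ) :
    ∃ p ∈ S, ∃ q ∈ S, zdot u (p - q) = widthZ u S h := by
  obtain ⟨p, hp, hsup⟩ := exists_mem_eq_sup' h (zdot u)
  obtain ⟨q, hq, hinf⟩ := exists_mem_eq_inf' h (zdot u)
  exact ⟨p, hp, q, hq, by rw [zdot_sub, widthZ, hsup, hinf]⟩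

theorem isCoprime_of_widthZ_le {u : ℤ × ℤ} (hpos : 0 < widthZ u S h)
    (hmin : ∀ w, w ≠ 0 → widthZ u S h ≤ widthZ w S h) : IsCoprime u.1 u.2 := by
  have hu : u ≠ 0 := by rintro rfl; simp [widthZ, zdot] at hpos
  have hgcd : 0 < Int.gcd u.1 u.2 :=
    Int.gcd_pos_iff.2 (by contrapose! hu; exact Prod.ext hu.1 hu.2)
  obtain ⟨g, a, b, hg₀, hab, ha, hb⟩ := Int.exists_gcd_one' hgcd
  have hab₀ : (a, b) ≠ 0 := by rintro h₀; simp_all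
  obtain ⟨p, hp, q, hq, hpq⟩ := exists_zdot_sub_eq_widthZ h (a, b)
  have hscale : zdot u (p - q) = g * zdot (a, b) (p - q) := by
    simp only [zdot, ha, hb]; ring
  have hgw : (g : ℤ) * widthZ u S h ≤ widthZ u S h := calc
    (g : ℤ) * widthZ u S h ≤ g * widthZ (a, b) S h := by gcongr; exact hmin _ hab₀
    _ = zdot u (p - q) := by rw [hscale, hpq]
    _ ≤ widthZ u S h := zdot_sub_le_widthZ h u hp hq
  have hg : g = 1 := by
    have := (mul_le_iff_le_one_left hpos).1 hgw
    omega
  rw [Int.isCoprime_iff_gcd_eq_one, ha, hb, hg]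
  simpa using hab

end Width

theorem exists_wedge_eq_one_zdot_nonneg_lt {u : ℤ × ℤ} (hu : IsCoprime u.1 u.2) (d : ℤ × ℤ)
    (hd : 0 < zdot u d) : ∃ v, wedge v u = 1 ∧ 0 ≤ zdot v d ∧ zdot v d < zdot u d := by
  obtain ⟨α, β, hαβ⟩ := hu
  set v₀ : ℤ × ℤ := (β, -α)
  refine ⟨v₀ - (zdot v₀ d / zdot u d) • u, ?_, ?_⟩
  · simp only [wedge, v₀, Prod.fst_sub, Prod.snd_sub, Prod.smul_fst, Prod.smul_snd, smul_eq_mul]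
    linear_combination hαβ
  · have : zdot (v₀ - (zdot v₀ d / zdot u d) • u) d = zdot v₀ d % zdot u d := by
      rw [Int.emod_def]
      simp only [zdot, Prod.fst_sub, Prod.snd_sub, Prod.smul_fst, Prod.smul_snd, smul_eq_mul]
      ring
    rw [this]
    exact ⟨Int.emod_nonneg _ hd.ne', Int.emod_lt_of_pos _ hd⟩

theorem three_mul_sq_le_abs_wedge {k : ℤ} {A D G : ℤ × ℤ} (hA₀ : 0 ≤ A.1) (hA₁ : A.1 ≤ 2 * k)
    (hA₂ : A.2 = 2 * k) (hD₁ : 2 * k ≤ D.1) (hD₂ : |D.2| ≤ 2 * k) (hG₁ : 2 * k ≤ G.1 - G.2)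
    (hG₂ : |G.2| ≤ 2 * k) :
    3 * k ^ 2 ≤ |wedge A D| ∨ 3 * k ^ 2 ≤ |wedge A G| ∨ 3 * k ^ 2 ≤ |wedge D G| := by
  obtain ⟨t, _⟩ := A
  obtain ⟨Dx, Dy⟩ := D
  obtain ⟨Gx, Gy⟩ := G
  simp only [wedge] at *
  subst hA₂
  rw [abs_le] at hD₂ hG₂
  by_cases h₁ : t * Dy ≤ k ^ 2
  · left
    exact le_abs.2 (Or.inr (by nlinarith))
  by_cases h₂ : (2 * k - t) * -Gy ≤ k ^ 2
  · right; left
    exact le_abs.2 (Or.inr (by nlinarith))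
  right; right
  have ht : 0 < t := by nlinarith
  have ht' : 0 < 2 * k - t := by nlinarith
  have hprod : t * (2 * k - Dy) * ((2 * k - t) * (2 * k + Gy)) ≤
      (2 * k * t - k ^ 2) * (3 * k ^ 2 - 2 * k * t) :=
    mul_le_mul (by linarith) (by linarith) (by nlinarith) (by nlinarith)
  -- `(2kt - k²)(3k² - 2kt) = k² t (2k - t) - 3k² (t - k)²`
  have key : (2 * k - Dy) * (2 * k + Gy) ≤ k ^ 2 := by
    refine le_of_mul_le_mul_left ?_ (mul_pos ht ht')
    nlinarith [sq_nonneg (t - k)]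
  have hDy : 0 < Dy := by nlinarith
  have hGy : Gy < 0 := by nlinarith
  have hDG := mul_le_mul_of_nonpos_right hD₁ hGy.le
  have hGD := mul_le_mul_of_nonneg_left hG₁ hDy.le
  exact le_abs.2 (Or.inr (by linarith))

theorem area_ge_of_even_width (S : Finset (ℤ × ℤ)) (h : S.Nonempty) (k : ℕ)
    (hmin : ∀ u : ℤ × ℤ, u ≠ 0 → (2 * k : ℤ) ≤ widthZ u S h)
    (hatt : ∃ u : ℤ × ℤ, u ≠ 0 ∧ widthZ u S h = (2 * k : ℤ)) :
    (3 / 2 : ℝ) * (k : ℝ) ^ 2 ≤ areaOf S := by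
  obtain ⟨u, -, huw⟩ := hatt
  rcases Nat.eq_zero_or_pos k with rfl | hk
  · rw [Nat.cast_zero, zero_pow two_ne_zero, mul_zero]
    exact ENNReal.toReal_nonneg
  have hu := isCoprime_of_widthZ_le h (by omega) fun w hw => huw ▸ hmin w hw
  obtain ⟨b, hb, a, ha, hab⟩ := exists_zdot_sub_eq_widthZ h u
  obtain ⟨v, hvu, ht₀, ht⟩ := exists_wedge_eq_one_zdot_nonneg_lt hu (b - a) (by omega)
  have hv : v ≠ 0 := by rintro rfl; simp [wedge] at hvu
  have hvu' : v - u ≠ 0 := by rw [sub_ne_zero]; rintro rfl; simp at hvu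
  obtain ⟨r, hr, l, hl, hrl⟩ := exists_zdot_sub_eq_widthZ h v
  obtain ⟨f, hf, e, he, hfe⟩ := exists_zdot_sub_eq_widthZ h (v - u)
  have harea : ∀ {P Q R T}, P ∈ S → Q ∈ S → R ∈ S → T ∈ S →
      3 * (k : ℤ) ^ 2 ≤ |wedge (Q - P) (T - R)| → (3 / 2 : ℝ) * (k : ℝ) ^ 2 ≤ areaOf S := by
    intro P Q R T hP hQ hR hT hwedge
    have := abs_wedge_le_two_mul_areaOf hP hQ hR hT
    have : (3 * k ^ 2 : ℝ) ≤ |((wedge (Q - P) (T - R) : ℤ) : ℝ)| := by exact_mod_cast hwedge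
    linarith
  rcases three_mul_sq_le_abs_wedge (A := (zdot v (b - a), zdot u (b - a)))
      (D := (zdot v (r - l), zdot u (r - l))) (G := (zdot v (f - e), zdot u (f - e)))
      ht₀ (by omega) (hab.trans huw) (hrl ▸ hmin v hv) (huw ▸ abs_zdot_sub_le_widthZ h u hr hl)
      (by rw [← sub_zdot, hfe]; exact hmin _ hvu') (huw ▸ abs_zdot_sub_le_widthZ h u hf he)
    with H | H | H <;> rw [wedge_zdot_zdot, hvu, one_mul] at H
  exacts [harea ha hb hl hr H, harea ha hb he hf H, harea hl hr he hf H]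
end

section
/- Let B ⊂ ℝ² be a convex lattice polygon with minimal lattice width ω(B) = 2k+1 for a nonnegative integer k. Then area(B) ≥ (3k² + 3k + 1)/2. -/
open Finset Set MeasureTheory

/-!
Let `u` attain the lattice width `w = 2k + 1`. Then `u` is primitive, so it has unimodular
partners `v` (`det (u, v) = 1`); take one of least width `b`, so that `w ≤ b ≤ ω_{v ± u}`.
For lattice points `A, B, C, D` of the polygon, `|det (B - A, D - C)|` is an integer bounded by
twice the area: the triangles `ABC` and `ABD` lie on opposite sides of the line `AB`, or one of
them alone suffices. Pairing the extremal points of the polygon in the directions `u`, `v` and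
`v - u` (or `v + u`) gives three such determinants, one of which is at least
`(4 w b - w²) / 4 ≥ 3 w² / 4`. By integrality, twice the area is at least `3k² + 3k + 1`.
-/

open scoped Pointwise

namespace LatticeWidth

def cross {R : Type*} [CommRing R] (x : R × R) : R × R →ₗ[R] R :=
  x.1 • LinearMap.snd R R R - x.2 • LinearMap.fst R R R

@[simp]
lemma cross_apply {R : Type*} [CommRing R] (x y : R × R) :
    cross x y = x.1 * y.2 - x.2 * y.1 := by
  simp [cross]

lemma cross_apply_self {R : Type*} [CommRing R] (x : R × R) : cross x x = 0 := by
  rw [cross_apply, mul_comm, sub_self]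

lemma ofReal_half_le_volume_stdTriangle :
    ENNReal.ofReal (1 / 2) ≤ volume (convexHull ℝ ({0, (1, 0), (0, 1)} : Set (ℝ × ℝ))) := by
  have hsub : regionBetween (fun _ => 0) (fun x => 1 - x) (Ioo 0 1) ⊆
      convexHull ℝ ({0, (1, 0), (0, 1)} : Set (ℝ × ℝ)) := by
    rintro ⟨x, y⟩ ⟨⟨hx, -⟩, ⟨hy, hxy⟩⟩
    have hs : 0 < x + y := by linarith
    rw [convexHull_insert (by simp), convexHull_pair, mem_convexJoin]
    refine ⟨0, rfl, ((x + y)⁻¹ * x, (x + y)⁻¹ * y), ?_, ?_⟩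
    · refine ⟨(x + y)⁻¹ * x, (x + y)⁻¹ * y, by positivity, by positivity, by field_simp, ?_⟩
      simp
    · refine ⟨1 - (x + y), x + y, by linarith, hs.le, by ring, ?_⟩
      simp only [smul_zero, zero_add, Prod.smul_mk, smul_eq_mul]
      congr 1 <;> field_simp
  have hint : IntegrableOn (fun x : ℝ => 1 - x) (Ioo 0 1) :=
    (continuous_const.sub continuous_id).integrableOn_Icc.mono_set Ioo_subset_Icc_self
  calc ENNReal.ofReal (1 / 2)
      = volume (regionBetween (fun _ => 0) (fun x => 1 - x) (Ioo (0 : ℝ) 1)) := by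
        rw [Measure.volume_eq_prod, volume_regionBetween_eq_integral integrableOn_zero hint
          measurableSet_Ioo (fun x hx => by linarith [hx.2]),
          ← integral_Ioc_eq_integral_Ioo, ← intervalIntegral.integral_of_le zero_le_one]
        simp only [Pi.sub_apply, sub_zero]
        rw [intervalIntegral.integral_sub intervalIntegrable_const
          intervalIntegral.intervalIntegrable_id, integral_id]
        norm_num
    _ ≤ _ := measure_mono hsub

lemma ofReal_abs_cross_div_two_le_volume_triangle (A B C : ℝ × ℝ) :
    ENNReal.ofReal (|cross (B - A) (C - A)| / 2) ≤ volume (convexHull ℝ {A, B, C}) := by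
  set f := Matrix.toLin (Module.Basis.finTwoProd ℝ) (Module.Basis.finTwoProd ℝ)
    !![(B - A).1, (C - A).1; (B - A).2, (C - A).2]
  have hdet : LinearMap.det f = cross (B - A) (C - A) := by
    rw [LinearMap.det_toLin, Matrix.det_fin_two_of, cross_apply]
    ring
  have himage : convexHull ℝ {A, B, C} =
      A +ᵥ f '' convexHull ℝ ({0, (1, 0), (0, 1)} : Set (ℝ × ℝ)) := by
    rw [f.image_convexHull, ← convexHull_vadd]
    congr 1
    simp [f, image_insert_eq, vadd_set_insert, Prod.mk_zero_zero, -Prod.fst_sub, -Prod.snd_sub]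
  calc ENNReal.ofReal (|cross (B - A) (C - A)| / 2)
      = ENNReal.ofReal |LinearMap.det f| * ENNReal.ofReal (1 / 2) := by
        rw [hdet, ← ENNReal.ofReal_mul (abs_nonneg _)]
        ring_nf
    _ ≤ ENNReal.ofReal |LinearMap.det f| *
          volume (convexHull ℝ ({0, (1, 0), (0, 1)} : Set (ℝ × ℝ))) := by
        gcongr
        exact ofReal_half_le_volume_stdTriangle
    _ = volume (convexHull ℝ {A, B, C}) := by
        rw [himage, measure_vadd, Measure.addHaar_image_linearMap]

lemma volume_setOf_cross_eq {D : ℝ × ℝ} (hD : D ≠ 0) (A : ℝ × ℝ) :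
    volume {p | cross D p = cross D A} = 0 := by
  have hker : LinearMap.ker (cross D) ≠ ⊤ := by
    rw [Ne, LinearMap.ker_eq_top]
    intro h0
    have h := LinearMap.congr_fun h0 (-D.2, D.1)
    simp only [cross_apply, LinearMap.zero_apply, mul_neg, sub_neg_eq_add] at h
    have h2 := (add_eq_zero_iff_of_nonneg (mul_self_nonneg _) (mul_self_nonneg _)).1 h
    exact hD (Prod.ext (mul_self_eq_zero.1 h2.1) (mul_self_eq_zero.1 h2.2))
  have hset : {p | cross D p = cross D A} = (· + -A) ⁻¹' (LinearMap.ker (cross D) : Set _) := by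
    ext p
    rw [Set.mem_preimage, SetLike.mem_coe, LinearMap.mem_ker, map_add, map_neg, ← sub_eq_add_neg,
      sub_eq_zero]
    rfl
  rw [hset, measure_preimage_add_right]
  exact Measure.addHaar_submodule _ _ hker

lemma ofReal_cross_sub_div_two_le_volume {s : Set (ℝ × ℝ)} {A B C D : ℝ × ℝ}
    (hA : A ∈ s) (hB : B ∈ s) (hC : C ∈ s) (hD : D ∈ s)
    (hCA : cross (B - A) C ≤ cross (B - A) A) (hAD : cross (B - A) A ≤ cross (B - A) D) :
    ENNReal.ofReal (cross (B - A) (D - C) / 2) ≤ volume (convexHull ℝ s) := by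
  set f := cross (B - A)
  rcases eq_or_ne (B - A) 0 with hBA | hBA
  · simp [f, hBA]
  have hfB : f B = f A := by rw [← sub_eq_zero, ← map_sub, cross_apply_self]
  have hlow : convexHull ℝ {A, B, C} ⊆ {p | f p ≤ f A} :=
    convexHull_min (by rintro _ (rfl | rfl | rfl) <;> simp [hfB, hCA])
      (convex_halfSpace_le f.isLinear _)
  have hhigh : convexHull ℝ {A, B, D} ⊆ {p | f A ≤ f p} :=
    convexHull_min (by rintro _ (rfl | rfl | rfl) <;> simp [hfB, hAD])
      (convex_halfSpace_ge f.isLinear _)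
  have hdisj : AEDisjoint volume (convexHull ℝ {A, B, C}) (convexHull ℝ {A, B, D}) :=
    measure_mono_null (fun p hp => le_antisymm (hlow hp.1) (hhigh hp.2))
      (volume_setOf_cross_eq hBA A)
  have hsub {X : ℝ × ℝ} (hX : X ∈ s) : convexHull ℝ {A, B, X} ⊆ convexHull ℝ s :=
    convexHull_mono (by simp [insert_subset_iff, hA, hB, hX])
  calc ENNReal.ofReal (f (D - C) / 2)
      = ENNReal.ofReal (|f (C - A)| / 2) + ENNReal.ofReal (|f (D - A)| / 2) := by
        rw [← ENNReal.ofReal_add (by positivity) (by positivity), map_sub, map_sub, map_sub,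
          abs_of_nonpos (by linarith), abs_of_nonneg (by linarith)]
        ring_nf
    _ ≤ volume (convexHull ℝ {A, B, C}) + volume (convexHull ℝ {A, B, D}) :=
        add_le_add (ofReal_abs_cross_div_two_le_volume_triangle A B C)
          (ofReal_abs_cross_div_two_le_volume_triangle A B D)
    _ = volume (convexHull ℝ {A, B, C} ∪ convexHull ℝ {A, B, D}) :=
        (measure_union₀ ((toFinite _).isCompact_convexHull ℝ).measurableSet.nullMeasurableSet
          hdisj).symm
    _ ≤ volume (convexHull ℝ s) := measure_mono (union_subset (hsub hC) (hsub hD))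

lemma ofReal_abs_cross_div_two_le_volume {s : Set (ℝ × ℝ)} {A B C D : ℝ × ℝ}
    (hA : A ∈ s) (hB : B ∈ s) (hC : C ∈ s) (hD : D ∈ s) :
    ENNReal.ofReal (|cross (B - A) (D - C)| / 2) ≤ volume (convexHull ℝ s) := by
  classical
  -- `A` itself is a candidate, so `P` and `Q` lie on opposite sides of the line `AB`.
  obtain ⟨P, hP, hPmin⟩ := Finset.exists_min_image {A, C, D} (cross (B - A)) (by simp)
  obtain ⟨Q, hQ, hQmax⟩ := Finset.exists_max_image {A, C, D} (cross (B - A)) (by simp)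
  have hs : ∀ X ∈ ({A, C, D} : Finset (ℝ × ℝ)), X ∈ s := by simp [hA, hC, hD]
  refine le_trans (ENNReal.ofReal_le_ofReal ?_) (ofReal_cross_sub_div_two_le_volume hA hB
    (hs P hP) (hs Q hQ) (hPmin A (by simp)) (hQmax A (by simp)))
  have := hPmin C (by simp)
  have := hPmin D (by simp)
  have := hQmax C (by simp)
  have := hQmax D (by simp)
  rw [map_sub, map_sub]
  linarith [abs_le.2 (⟨by linarith, by linarith⟩ :
    -(cross (B - A) Q - cross (B - A) P) ≤ cross (B - A) D - cross (B - A) C ∧ _)]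

lemma abs_cross_sub_le_floor_two_mul_areaOf {S : Finset (ℤ × ℤ)} {A B C D : ℤ × ℤ}
    (hA : A ∈ S) (hB : B ∈ S) (hC : C ∈ S) (hD : D ∈ S) :
    |cross (B - A) (D - C)| ≤ ⌊2 * areaOf S⌋ := by
  have hmem {X : ℤ × ℤ} (hX : X ∈ S) : toR X ∈ toR '' S := mem_image_of_mem toR hX
  have hfin : volume (convexHull ℝ (toR '' S)) ≠ ⊤ :=
    ((S.finite_toSet.image toR).isCompact_convexHull ℝ).measure_lt_top.ne
  have harea := ENNReal.toReal_mono hfin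
    (ofReal_abs_cross_div_two_le_volume (hmem hA) (hmem hB) (hmem hC) (hmem hD))
  rw [ENNReal.toReal_ofReal (by positivity)] at harea
  have hcast : ((|cross (B - A) (D - C)| : ℤ) : ℝ) =
      |cross (toR B - toR A) (toR D - toR C)| := by
    simp [toR]
  rw [Int.le_floor, hcast]
  unfold areaOf
  linarith

lemma zdot_sub_right (u P Q : ℤ × ℤ) : zdot u (P - Q) = zdot u P - zdot u Q := by
  simp only [zdot, Prod.fst_sub, Prod.snd_sub]
  ring

lemma zdot_sub_left (u v P : ℤ × ℤ) : zdot (u - v) P = zdot u P - zdot v P := by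
  simp only [zdot, Prod.fst_sub, Prod.snd_sub]
  ring

lemma zdot_neg_left (u P : ℤ × ℤ) : zdot (-u) P = -zdot u P := by
  simp only [zdot, Prod.fst_neg, Prod.snd_neg]
  ring

lemma zdot_smul_left (c : ℤ) (u P : ℤ × ℤ) : zdot (c • u) P = c * zdot u P := by
  simp only [zdot, Prod.smul_fst, Prod.smul_snd, smul_eq_mul]
  ring

lemma zdot_mul_zdot_sub_zdot_mul_zdot (u v P Q : ℤ × ℤ) :
    zdot u P * zdot v Q - zdot v P * zdot u Q = cross u v * cross P Q := by
  simp only [zdot, cross_apply]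
  ring

-- If all three are `< 4ab - a²`, eliminating `q` and then `s` leaves `(a - 2p)² (a - 4b) > 0`.
lemma four_mul_mul_sub_sq_le_max {a b p q e s : ℤ} (ha : 0 < a) (hab : a ≤ b) (hp : 0 ≤ p)
    (hpa : p ≤ a) (heb : e ≤ b) (hbes : b ≤ e + s) :
    4 * a * b - a ^ 2 ≤ 4 * max (a * b - p * q) (max (a * e + q * s) (p * e + b * s)) := by
  by_contra! hlt
  rw [mul_max_of_nonneg _ _ (by norm_num), mul_max_of_nonneg _ _ (by norm_num), max_lt_iff,
    max_lt_iff] at hlt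
  obtain ⟨h1, h2, h3⟩ := hlt
  have hs : 0 ≤ s := by linarith
  have h1' : a ^ 2 < 4 * (p * q) := by linarith
  have h2' : a ^ 2 < 4 * (s * (a - q)) := by nlinarith [mul_le_mul_of_nonneg_left hbes ha.le]
  have h3' : 4 * (p * b) + 4 * (s * (b - p)) < 4 * a * b - a ^ 2 := by
    nlinarith [mul_le_mul_of_nonneg_left hbes hp]
  have hqa : q < a := by nlinarith
  have hap : a < 4 * p := by nlinarith
  have hkey : p * a < s * (4 * p - a) := by
    nlinarith [mul_lt_mul_of_pos_right h2' (by linarith : 0 < 4 * p - a),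
      mul_lt_mul_of_pos_right h1' ha]
  nlinarith [mul_lt_mul_of_pos_left h3' (by linarith : 0 < 4 * p - a),
    mul_le_mul_of_nonneg_left hkey.le (by linarith : 0 ≤ 4 * (b - p)),
    mul_nonneg (sq_nonneg (2 * p - a)) (by linarith : 0 ≤ 4 * b - a)]

section Width

variable (S : Finset (ℤ × ℤ)) (h : S.Nonempty)

lemma zdot_sub_le_widthZ {u P Q : ℤ × ℤ} (hP : P ∈ S) (hQ : Q ∈ S) :
    zdot u (P - Q) ≤ widthZ u S h := by
  rw [zdot_sub_right, widthZ]
  exact sub_le_sub (S.le_sup' (zdot u) hP) (S.inf'_le (zdot u) hQ)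

lemma exists_widthZ_eq_zdot_sub (u : ℤ × ℤ) :
    ∃ P ∈ S, ∃ Q ∈ S, widthZ u S h = zdot u (P - Q) := by
  obtain ⟨P, hP, hPeq⟩ := S.exists_mem_eq_sup' h (zdot u)
  obtain ⟨Q, hQ, hQeq⟩ := S.exists_mem_eq_inf' h (zdot u)
  exact ⟨P, hP, Q, hQ, by rw [widthZ, hPeq, hQeq, zdot_sub_right]⟩

lemma widthZ_nonneg (u : ℤ × ℤ) : 0 ≤ widthZ u S h := by
  obtain ⟨P, hP⟩ := id h
  have hPP := zdot_sub_le_widthZ S h (u := u) hP hP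
  rwa [zdot_sub_right, sub_self] at hPP

lemma widthZ_neg (u : ℤ × ℤ) : widthZ (-u) S h = widthZ u S h := by
  have hle (u : ℤ × ℤ) : widthZ (-u) S h ≤ widthZ u S h := by
    obtain ⟨P, hP, Q, hQ, hPQ⟩ := exists_widthZ_eq_zdot_sub S h (-u)
    calc widthZ (-u) S h = zdot u (Q - P) := by
          rw [hPQ, zdot_neg_left, zdot_sub_right, zdot_sub_right, neg_sub]
      _ ≤ widthZ u S h := zdot_sub_le_widthZ S h hQ hP
  exact le_antisymm (hle u) (by simpa using hle (-u))

lemma widthZ_smul {c : ℤ} (hc : 0 ≤ c) (u : ℤ × ℤ) :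
    widthZ (c • u) S h = c * widthZ u S h := by
  obtain ⟨P, hP, Q, hQ, hPQ⟩ := exists_widthZ_eq_zdot_sub S h (c • u)
  obtain ⟨P', hP', Q', hQ', hPQ'⟩ := exists_widthZ_eq_zdot_sub S h u
  refine le_antisymm ?_ ?_
  · rw [hPQ, zdot_smul_left]
    exact mul_le_mul_of_nonneg_left (zdot_sub_le_widthZ S h hP hQ) hc
  · rw [hPQ', ← zdot_smul_left]
    exact zdot_sub_le_widthZ S h hP' hQ'

lemma isCoprime_of_widthZ_le {u : ℤ × ℤ} (hu : u ≠ 0) (hpos : 0 < widthZ u S h)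
    (hmin : ∀ u' : ℤ × ℤ, u' ≠ 0 → widthZ u S h ≤ widthZ u' S h) : IsCoprime u.1 u.2 := by
  have hgcd : 0 < Int.gcd u.1 u.2 :=
    Int.gcd_pos_iff.2 (by by_contra! h0; exact hu (Prod.ext h0.1 h0.2))
  obtain ⟨g, a, b, hg, hab, ha, hb⟩ := Int.exists_gcd_one' hgcd
  have hu' : u = (g : ℤ) • (a, b) := Prod.ext (by simp [ha, mul_comm]) (by simp [hb, mul_comm])
  have hab0 : ((a, b) : ℤ × ℤ) ≠ 0 := fun h0 => by
    simp only [Prod.mk_eq_zero] at h0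
    simp [h0.1, h0.2] at hab
  have hg1 : (g : ℤ) = 1 := by
    have hw : widthZ u S h = g * widthZ (a, b) S h := by
      rw [← widthZ_smul S h (Int.natCast_nonneg g), ← hu']
    have hle := hmin _ hab0
    have : (g : ℤ) ≤ 1 := by nlinarith
    omega
  rw [Int.isCoprime_iff_gcd_eq_one, hu']
  simpa [hg1] using hab

lemma exists_cross_eq_one_forall_widthZ_le {u : ℤ × ℤ} (hu : IsCoprime u.1 u.2) :
    ∃ v, cross u v = 1 ∧ ∀ v', cross u v' = 1 → widthZ v S h ≤ widthZ v' S h := by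
  obtain ⟨a, b, hab⟩ := hu
  obtain ⟨_, ⟨v, hv, rfl⟩, hleast⟩ :=
    Int.exists_least_of_bdd (P := fun n => ∃ v, cross u v = 1 ∧ widthZ v S h = n)
      ⟨0, by rintro _ ⟨v, -, rfl⟩; exact widthZ_nonneg S h v⟩
      ⟨_, (-b, a), by simp only [cross_apply]; linear_combination hab, rfl⟩
  exact ⟨v, hv, fun v' hv' => hleast _ ⟨v', hv', rfl⟩⟩

lemma zdot_mul_zdot_sub_le_floor {u v : ℤ × ℤ} (huv : |cross u v| = 1) {A B C D : ℤ × ℤ}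
    (hA : A ∈ S) (hB : B ∈ S) (hC : C ∈ S) (hD : D ∈ S) :
    zdot u (B - A) * zdot v (D - C) - zdot v (B - A) * zdot u (D - C) ≤ ⌊2 * areaOf S⌋ :=
  calc _ = cross u v * cross (B - A) (D - C) := zdot_mul_zdot_sub_zdot_mul_zdot ..
    _ ≤ |cross (B - A) (D - C)| := (le_abs_self _).trans (by rw [abs_mul, huv, one_mul])
    _ ≤ ⌊2 * areaOf S⌋ := abs_cross_sub_le_floor_two_mul_areaOf hA hB hC hD

-- The three determinants pair up the diagonals `BT`, `LR`, `NE` joining extremal points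
-- in the directions `u`, `v` and `v - u`.
lemma four_mul_widthZ_mul_widthZ_sub_sq_le_floor_of_nonneg {u v R L : ℤ × ℤ}
    (huv : |cross u v| = 1) (hR : R ∈ S) (hL : L ∈ S) (hRL : widthZ v S h = zdot v (R - L))
    (hp : 0 ≤ zdot u (R - L)) (hpos : 0 < widthZ u S h) (hle : widthZ u S h ≤ widthZ v S h)
    (hdiag : widthZ v S h ≤ widthZ (v - u) S h) :
    4 * widthZ u S h * widthZ v S h - widthZ u S h ^ 2 ≤ 4 * ⌊2 * areaOf S⌋ := by
  obtain ⟨T, hT, B, hB, hTB⟩ := exists_widthZ_eq_zdot_sub S h u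
  obtain ⟨E, hE, N, hN, hEN⟩ := exists_widthZ_eq_zdot_sub S h (v - u)
  have hNE : zdot u (N - E) = -zdot u (E - N) := by
    rw [zdot_sub_right, zdot_sub_right, neg_sub]
  have hdiag' : widthZ v S h ≤ zdot v (E - N) + zdot u (N - E) := by
    rwa [hNE, ← sub_eq_add_neg, ← zdot_sub_left, ← hEN]
  refine (four_mul_mul_sub_sq_le_max (p := zdot u (R - L)) (q := zdot v (T - B)) hpos hle hp
    (zdot_sub_le_widthZ S h hR hL) (zdot_sub_le_widthZ S h hE hN) hdiag').trans
    (mul_le_mul_of_nonneg_left (max_le ?_ (max_le ?_ ?_)) (by norm_num))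
  · rw [hTB, hRL]
    linarith [zdot_mul_zdot_sub_le_floor S huv hB hT hL hR]
  · rw [hTB, hNE]
    linarith [zdot_mul_zdot_sub_le_floor S huv hB hT hN hE]
  · rw [hRL, hNE]
    linarith [zdot_mul_zdot_sub_le_floor S huv hL hR hN hE]

lemma four_mul_widthZ_mul_widthZ_sub_sq_le_floor {u v : ℤ × ℤ} (huv : |cross u v| = 1)
    (hpos : 0 < widthZ u S h) (hle : widthZ u S h ≤ widthZ v S h)
    (hadd : widthZ v S h ≤ widthZ (v + u) S h) (hsub : widthZ v S h ≤ widthZ (v - u) S h) :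
    4 * widthZ u S h * widthZ v S h - widthZ u S h ^ 2 ≤ 4 * ⌊2 * areaOf S⌋ := by
  obtain ⟨R, hR, L, hL, hRL⟩ := exists_widthZ_eq_zdot_sub S h v
  rcases le_total 0 (zdot u (R - L)) with hp | hp
  · exact four_mul_widthZ_mul_widthZ_sub_sq_le_floor_of_nonneg S h huv hR hL hRL hp hpos hle hsub
  -- Otherwise pass to `-v`: this swaps `R` and `L`, and `-v - u = -(v + u)`.
  rw [← widthZ_neg S h v] at hle hadd ⊢
  refine four_mul_widthZ_mul_widthZ_sub_sq_le_floor_of_nonneg S h (R := L) (L := R)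
    (by rwa [map_neg, abs_neg]) hL hR ?_ ?_ hpos hle
    (by rwa [← widthZ_neg S h (v + u), neg_add'] at hadd)
  · rw [widthZ_neg, hRL, zdot_neg_left, zdot_sub_right, zdot_sub_right, neg_sub]
  · rw [zdot_sub_right] at hp ⊢
    linarith

end Width

end LatticeWidth

open LatticeWidth in
theorem area_ge_of_odd_width (S : Finset (ℤ × ℤ)) (h : S.Nonempty) (k : ℕ)
    (hmin : ∀ u : ℤ × ℤ, u ≠ 0 → (2 * k + 1 : ℤ) ≤ widthZ u S h)
    (hatt : ∃ u : ℤ × ℤ, u ≠ 0 ∧ widthZ u S h = (2 * k + 1 : ℤ)) :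
    (3 * (k : ℝ) ^ 2 + 3 * (k : ℝ) + 1) / 2 ≤ areaOf S := by
  obtain ⟨u, hu, huw⟩ := hatt
  have hpos : 0 < widthZ u S h := by omega
  obtain ⟨v, hv, hvmin⟩ := exists_cross_eq_one_forall_widthZ_le S h
    (isCoprime_of_widthZ_le S h hu hpos fun u' hu' => huw ▸ hmin u' hu')
  have hwv : widthZ u S h ≤ widthZ v S h := huw ▸ hmin v (by rintro rfl; simp at hv)
  have hcore := four_mul_widthZ_mul_widthZ_sub_sq_le_floor S h (by rw [hv, abs_one]) hpos hwv
    (hvmin _ (by rw [map_add, hv, cross_apply_self, add_zero]))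
    (hvmin _ (by rw [map_sub, hv, cross_apply_self, sub_zero]))
  rw [huw] at hcore hwv
  have hfloor : 3 * (k : ℤ) ^ 2 + 3 * k + 1 ≤ ⌊2 * areaOf S⌋ := by
    nlinarith [mul_le_mul_of_nonneg_left hwv (by positivity : (0 : ℤ) ≤ 2 * k + 1)]
  have hfloorR : 3 * (k : ℝ) ^ 2 + 3 * k + 1 ≤ ⌊2 * areaOf S⌋ := by exact_mod_cast hfloor
  linarith [Int.floor_le (2 * areaOf S)]
end

section
/- The triangle T with vertices (0,0), (k,2k), (2k,k) has minimal lattice width ω(T) = 2k and area (3/2)k², so the bound area ≥ (3/8) ω² is attained with equality. -/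
open Finset Set MeasureTheory

/-!
The width of the triangle in direction `u` is `k` times the spread of the three numbers
`0`, `s = u₁ + 2u₂`, `t = 2u₁ + u₂`. A spread of at most one forces `s, t ∈ {0, 1}` or
`s, t ∈ {0, -1}`, and since `s + t = 3(u₁ + u₂)` only `s = t = 0`, i.e. `u = 0`, remains;
`u = (1, -1)` has spread exactly two. The triangle is the image of the unit triangle
(area `1/2`) under the linear map sending `(1,0), (0,1)` to the other two vertices, whose
determinant is `-3k²`.
-/

def spread (x y z : ℤ) : ℤ := max (max x y) z - min (min x y) z

lemma spread_mul {c : ℤ} (hc : 0 ≤ c) (x y z : ℤ) :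
    spread (c * x) (c * y) (c * z) = c * spread x y z := by
  simp only [spread, ← mul_max_of_nonneg _ _ hc, ← mul_min_of_nonneg _ _ hc, mul_sub]

lemma widthZ_triple (u p q r : ℤ × ℤ) (h : ({p, q, r} : Finset (ℤ × ℤ)).Nonempty) :
    widthZ u {p, q, r} h = spread (zdot u p) (zdot u q) (zdot u r) := by
  rw [widthZ, spread, sup'_insert, sup'_insert, sup'_singleton, inf'_insert, inf'_insert,
    inf'_singleton, max_assoc, min_assoc] <;> simp

lemma two_le_spread {a b : ℤ} (h : (a, b) ≠ 0) : 2 ≤ spread 0 (a + 2 * b) (2 * a + b) := by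
  simp only [ne_eq, Prod.mk_eq_zero, not_and_or] at h
  simp only [spread]
  omega

lemma widthZ_triangle (k : ℕ) (u : ℤ × ℤ)
    (h : ({(0, 0), ((k : ℤ), (2 * k : ℤ)), ((2 * k : ℤ), (k : ℤ))} : Finset (ℤ × ℤ)).Nonempty) :
    widthZ u {(0, 0), ((k : ℤ), (2 * k : ℤ)), ((2 * k : ℤ), (k : ℤ))} h =
      k * spread 0 (u.1 + 2 * u.2) (2 * u.1 + u.2) := by
  rw [widthZ_triple, ← spread_mul (Int.natCast_nonneg k)]
  congr 1 <;> simp only [zdot] <;> ring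

def unitTriangle : Set (ℝ × ℝ) := {p | 0 ≤ p.1 ∧ 0 ≤ p.2 ∧ p.1 + p.2 ≤ 1}

lemma convexHull_zero_unitVectors : convexHull ℝ {0, (1, 0), (0, 1)} = unitTriangle := by
  apply subset_antisymm
  · refine convexHull_min ?_ ?_
    · rintro p (rfl | rfl | rfl) <;> simp [unitTriangle]
    · rintro p ⟨hp1, hp2, hp3⟩ q ⟨hq1, hq2, hq3⟩ a b ha hb hab
      simp only [unitTriangle, Set.mem_ofPred_eq, Prod.fst_add, Prod.snd_add, Prod.smul_fst,
        Prod.smul_snd, smul_eq_mul]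
      refine ⟨by positivity, by positivity, by nlinarith⟩
  · rintro ⟨x, y⟩ ⟨hx, hy, hxy⟩
    have := (convex_convexHull ℝ ({0, (1, 0), (0, 1)} : Set (ℝ × ℝ))).sum_mem
      (t := Finset.univ) (w := ![1 - x - y, x, y]) (z := ![0, (1, 0), (0, 1)])
      (by intro i _; fin_cases i <;> dsimp <;> linarith) (by rw [Fin.sum_univ_three]; dsimp; ring)
      (by intro i _; fin_cases i <;> apply subset_convexHull <;> simp)
    simpa [Fin.sum_univ_three] using this

lemma measurableSet_unitTriangle : MeasurableSet unitTriangle :=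
  (measurableSet_le measurable_const measurable_fst).inter
    ((measurableSet_le measurable_const measurable_snd).inter
      (measurableSet_le (measurable_fst.add measurable_snd) measurable_const))

lemma volume_preimage_mk_unitTriangle (x : ℝ) :
    volume (Prod.mk x ⁻¹' unitTriangle) =
      (Set.Icc 0 1).indicator (fun x => ENNReal.ofReal (1 - x)) x := by
  by_cases hx : x ∈ Set.Icc (0 : ℝ) 1
  · have hslice : Prod.mk x ⁻¹' unitTriangle = Set.Icc 0 (1 - x) := by
      ext y
      simp only [unitTriangle, Set.mem_preimage, Set.mem_ofPred_eq, Set.mem_Icc, hx.1, true_and]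
      constructor <;> intro h <;> constructor <;> linarith [h.1, h.2]
    rw [hslice, Real.volume_Icc, indicator_of_mem hx, sub_zero]
  · have hslice : Prod.mk x ⁻¹' unitTriangle = ∅ := by
      ext y
      simp only [Set.mem_Icc, not_and_or, not_le] at hx
      simp only [unitTriangle, Set.mem_preimage, Set.mem_ofPred_eq, Set.mem_empty_iff_false,
        iff_false]
      rintro ⟨h1, h2, h3⟩
      rcases hx with hx | hx <;> linarith
    rw [hslice, measure_empty, indicator_of_notMem hx]

lemma volume_unitTriangle : volume unitTriangle = ENNReal.ofReal (1 / 2) := by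
  have hint : ∫ x in Set.Icc (0 : ℝ) 1, (1 - x) = 1 / 2 := by
    rw [integral_Icc_eq_integral_Ioc, ← intervalIntegral.integral_of_le zero_le_one,
      intervalIntegral.integral_sub intervalIntegrable_const intervalIntegral.intervalIntegrable_id]
    norm_num
  rw [Measure.volume_eq_prod, Measure.prod_apply measurableSet_unitTriangle]
  simp only [volume_preimage_mk_unitTriangle]
  rw [lintegral_indicator measurableSet_Icc, ← hint, ofReal_integral_eq_lintegral_ofReal]
  · exact (continuous_const.sub continuous_id).integrableOn_Icc
  · filter_upwards [ae_restrict_mem measurableSet_Icc] with x hx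
    exact sub_nonneg.2 hx.2

lemma volume_convexHull_triangle_zero (a b : ℝ × ℝ) :
    volume (convexHull ℝ {0, a, b}) = ENNReal.ofReal (|a.1 * b.2 - a.2 * b.1| / 2) := by
  let L : ℝ × ℝ →ₗ[ℝ] ℝ × ℝ :=
    (LinearMap.toSpanSingleton ℝ _ a).coprod (LinearMap.toSpanSingleton ℝ _ b)
  have hL : L '' {0, (1, 0), (0, 1)} = {0, a, b} := by simp [L, image_insert_eq]
  have hdet : LinearMap.det L = a.1 * b.2 - a.2 * b.1 := by
    rw [← LinearMap.det_toMatrix (Module.Basis.finTwoProd ℝ), Matrix.det_fin_two]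
    simp [LinearMap.toMatrix_apply, L, mul_comm]
  rw [← hL, ← LinearMap.image_convexHull, convexHull_zero_unitVectors,
    Measure.addHaar_image_linearMap, volume_unitTriangle, hdet,
    ← ENNReal.ofReal_mul (abs_nonneg _)]
  ring_nf

lemma areaOf_triangle_zero (p q : ℤ × ℤ) :
    areaOf {(0, 0), p, q} = |(p.1 * q.2 - p.2 * q.1 : ℤ)| / 2 := by
  have himage : toR '' ↑({(0, 0), p, q} : Finset (ℤ × ℤ)) = {0, toR p, toR q} := by
    simp [image_insert_eq, toR, Prod.mk_zero_zero]
  rw [areaOf, himage, volume_convexHull_triangle_zero, ENNReal.toReal_ofReal (by positivity)]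
  simp [toR]

lemma areaOf_triangle (k : ℕ) :
    areaOf {((0 : ℤ), (0 : ℤ)), ((k : ℤ), (2 * k : ℤ)), ((2 * k : ℤ), (k : ℤ))} =
      (3 / 2 : ℝ) * (k : ℝ) ^ 2 := by
  rw [areaOf_triangle_zero, show (k * k - 2 * k * (2 * k) : ℤ) = -(3 * k ^ 2) by ring]
  push_cast
  rw [abs_neg, abs_of_nonneg (by positivity)]
  ring

theorem triangle_extremal_general (k : ℕ)
    (S : Finset (ℤ × ℤ)) (hS : S = {((0 : ℤ), (0 : ℤ)), ((k : ℤ), (2 * k : ℤ)), ((2 * k : ℤ), (k : ℤ))})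
    (h : S.Nonempty) :
    (∀ u : ℤ × ℤ, u ≠ 0 → (2 * k : ℤ) ≤ widthZ u S h) ∧
    (∃ u : ℤ × ℤ, u ≠ 0 ∧ widthZ u S h = (2 * k : ℤ)) ∧
    areaOf S = (3 / 2 : ℝ) * (k : ℝ) ^ 2 ∧
    areaOf S = (3 / 8 : ℝ) * (2 * (k : ℝ)) ^ 2 := by
  subst hS
  refine ⟨fun u hu => ?_, ⟨(1, -1), by decide, ?_⟩, areaOf_triangle k,
    by rw [areaOf_triangle]; ring⟩
  · rw [widthZ_triangle, mul_comm 2 (k : ℤ)]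
    exact mul_le_mul_of_nonneg_left (two_le_spread hu) (Int.natCast_nonneg k)
  · rw [widthZ_triangle, mul_comm]
    rfl

theorem triangle_extremal (k : ℕ) (hk : 0 < k)
    (S : Finset (ℤ × ℤ)) (hS : S = {((0 : ℤ), (0 : ℤ)), ((k : ℤ), (2 * k : ℤ)), ((2 * k : ℤ), (k : ℤ))})
    (h : S.Nonempty) :
    (∀ u : ℤ × ℤ, u ≠ 0 → (2 * k : ℤ) ≤ widthZ u S h) ∧
    (∃ u : ℤ × ℤ, u ≠ 0 ∧ widthZ u S h = (2 * k : ℤ)) ∧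
    areaOf S = (3 / 2 : ℝ) * (k : ℝ) ^ 2 ∧
    areaOf S = (3 / 8 : ℝ) * (2 * (k : ℝ)) ^ 2 :=
  triangle_extremal_general k S hS h
end
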